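/- Define f(q) := (4q⁴ − 5q² + 1)K(q) + (−8q⁴ + 8q² − 1)E(q) on [1/√2, 1). Then f(1/√2) > 0, f(q) < 0 for q ∈ [q*, 1) (where q* is the unique zero of 2E − K in (0,1)), and f is strictly decreasing on (1/√2, q*). Consequently there exists a unique q̂ ∈ (1/√2, q*) with f(q̂) = 0, and f > 0 on [1/√2, q̂) while f < 0 on (q̂, 1). -/

import Mathlib

/-! Differentiating under the integral sign, and integrating by parts against
`sin θ cos θ / √(1 - q² sin² θ)`, gives the classical formulas `E' = (E - K) / q` and
`K' = (E - (1 - q²) K) / (q (1 - q²))`. They show that `2E - K` is strictly decreasing on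
`(0, 1)`, so `q*` separates the region `K < 2E` from `2E ≤ K`, and `1/√2 < q*` because `K < 2E`
as soon as `q² ≤ 1/2`. They also give `f' = q ((20q² - 13) K + 20 (1 - 2q²) E)`. For `q² > 1/2`
elementary sign estimates turn `2E ≤ K` into `f < 0` and `K < 2E` into `f' < 0`; `q̂` then comes
from the intermediate value theorem. -/

open Real Set Filter

noncomputable def Kc (q : ℝ) : ℝ := ∫ θ in (0:ℝ)..(π/2), 1 / Real.sqrt (1 - q^2 * Real.sin θ^2)

noncomputable def Ec (q : ℝ) : ℝ := ∫ θ in (0:ℝ)..(π/2), Real.sqrt (1 - q^2 * Real.sin θ^2)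

noncomputable def fc (q : ℝ) : ℝ := (4*q^4 - 5*q^2 + 1) * Kc q + (-8*q^4 + 8*q^2 - 1) * Ec q

open Topology intervalIntegral
open MeasureTheory (volume ae_of_all)

lemma one_sub_sq_mul_sin_sq_pos {q : ℝ} (hq : q ^ 2 < 1) (θ : ℝ) :
    0 < 1 - q ^ 2 * sin θ ^ 2 := by
  nlinarith [sin_sq_le_one θ, sq_nonneg q]

lemma continuous_comp_one_sub_sq_mul_sin_sq {φ : ℝ → ℝ} (hφ : ContinuousOn φ (Ioi 0)) {q : ℝ}
    (hq : q ^ 2 < 1) : Continuous fun θ => φ (1 - q ^ 2 * sin θ ^ 2) :=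
  hφ.comp_continuous (by fun_prop) (one_sub_sq_mul_sin_sq_pos hq)

lemma hasDerivAt_integral_comp_one_sub_sq_mul_sin_sq {φ φ' : ℝ → ℝ}
    (hφ : ∀ u, 0 < u → HasDerivAt φ (φ' u) u) (hφ' : ContinuousOn φ' (Ioi 0)) {q : ℝ}
    (hq : q ^ 2 < 1) :
    HasDerivAt (fun x => ∫ θ in (0:ℝ)..π/2, φ (1 - x ^ 2 * sin θ ^ 2))
      (∫ θ in (0:ℝ)..π/2, -2 * q * sin θ ^ 2 * φ' (1 - q ^ 2 * sin θ ^ 2)) q := by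
  have hφc : ContinuousOn φ (Ioi 0) := fun u hu => (hφ u hu).continuousAt.continuousWithinAt
  obtain ⟨r, hqr, hr⟩ := exists_between hq
  obtain ⟨C, hC⟩ := (isCompact_Icc (a := 1 - r) (b := 1)).exists_bound_of_continuousOn
    (hφ'.mono fun u hu => lt_of_lt_of_le (by linarith) hu.1)
  -- for `x ^ 2 < r` the argument of `φ'` stays in the compact `[1 - r, 1] ⊆ (0, ∞)`
  have hs : {x : ℝ | x ^ 2 < r} ∈ 𝓝 q := (isOpen_lt (by fun_prop) continuous_const).mem_nhds hqr
  refine (hasDerivAt_integral_of_dominated_loc_of_deriv_le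
    (F := fun x θ => φ (1 - x ^ 2 * sin θ ^ 2))
    (F' := fun x θ => -2 * x * sin θ ^ 2 * φ' (1 - x ^ 2 * sin θ ^ 2)) (bound := fun _ => 2 * C) hs
    (eventually_of_mem hs fun x hx => ?_) ?_ ?_ (ae_of_all _ fun θ _ x hx => ?_)
    (intervalIntegrable_const (μ := volume)) (ae_of_all _ fun θ _ x hx => ?_)).2
  · exact (continuous_comp_one_sub_sq_mul_sin_sq hφc (hx.trans hr)).aestronglyMeasurable
  · exact (continuous_comp_one_sub_sq_mul_sin_sq hφc hq).intervalIntegrable _ _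
  · exact (by fun_prop : Continuous fun θ => -2 * q * sin θ ^ 2).mul
      (continuous_comp_one_sub_sq_mul_sin_sq hφ' hq) |>.aestronglyMeasurable
  · have hx : x ^ 2 < r := hx
    have hu : 1 - x ^ 2 * sin θ ^ 2 ∈ Icc (1 - r) 1 := by
      constructor <;> nlinarith [sin_sq_le_one θ, sq_nonneg x, sq_nonneg (sin θ)]
    have hx1 : |x| ≤ 1 := abs_le_one_iff_mul_self_le_one.mpr (by nlinarith)
    simp only [norm_mul, norm_neg, norm_pow, Real.norm_eq_abs, abs_two]
    have hφ'u := hC _ hu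
    have hs1 : |sin θ| ^ 2 ≤ 1 := by rw [sq_abs]; exact sin_sq_le_one θ
    have hφ'u_nonneg := norm_nonneg (φ' (1 - x ^ 2 * sin θ ^ 2))
    calc 2 * |x| * |sin θ| ^ 2 * ‖φ' (1 - x ^ 2 * sin θ ^ 2)‖ ≤ 2 * 1 * 1 * C := by gcongr
      _ = 2 * C := by ring
  · have hx : x ^ 2 < r := hx
    have h := (hφ _ (one_sub_sq_mul_sin_sq_pos (hx.trans hr) θ)).comp x
      (((hasDerivAt_pow 2 x).mul_const (sin θ ^ 2)).const_sub 1)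
    exact h.congr_deriv (by push_cast; ring)

lemma continuousOn_one_div_sqrt : ContinuousOn (fun u : ℝ => 1 / √u) (Ioi 0) :=
  continuousOn_const.div continuous_sqrt.continuousOn fun _ hu => (sqrt_pos.2 hu).ne'

lemma hasDerivAt_one_div_sqrt {u : ℝ} (hu : 0 < u) :
    HasDerivAt (fun u => 1 / √u) (-1 / (2 * u * √u)) u := by
  have hw := sqrt_pos.2 hu
  refine ((hasDerivAt_const u (1 : ℝ)).div (hasDerivAt_sqrt hu.ne') hw.ne').congr_deriv ?_
  field_simp
  rw [sq_sqrt hu.le]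
  ring

lemma Kc_pos {q : ℝ} (hq : q ^ 2 < 1) : 0 < Kc q :=
  intervalIntegral_pos_of_pos_on
    ((continuous_comp_one_sub_sq_mul_sin_sq continuousOn_one_div_sqrt hq).intervalIntegrable _ _)
    (fun θ _ => by have := one_sub_sq_mul_sin_sq_pos hq θ; positivity) pi_div_two_pos

lemma Ec_pos {q : ℝ} (hq : q ^ 2 < 1) : 0 < Ec q :=
  intervalIntegral_pos_of_pos_on
    ((continuous_comp_one_sub_sq_mul_sin_sq continuous_sqrt.continuousOn hq).intervalIntegrable _ _)
    (fun θ _ => sqrt_pos.2 (one_sub_sq_mul_sin_sq_pos hq θ)) pi_div_two_pos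

lemma Ec_le_Kc {q : ℝ} (hq : q ^ 2 < 1) : Ec q ≤ Kc q := by
  refine integral_mono_on pi_div_two_pos.le
    ((continuous_comp_one_sub_sq_mul_sin_sq continuous_sqrt.continuousOn hq).intervalIntegrable _ _)
    ((continuous_comp_one_sub_sq_mul_sin_sq continuousOn_one_div_sqrt hq).intervalIntegrable _ _)
    fun θ _ => ?_
  have hu := one_sub_sq_mul_sin_sq_pos hq θ
  rw [le_div_iff₀ (sqrt_pos.2 hu), mul_self_sqrt hu.le]
  nlinarith [sq_nonneg q, sq_nonneg (sin θ)]

lemma Kc_lt_two_mul_Ec {q : ℝ} (hq : q ^ 2 ≤ 1 / 2) : Kc q < 2 * Ec q := by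
  have hq1 : q ^ 2 < 1 := by linarith
  have hE := (continuous_comp_one_sub_sq_mul_sin_sq continuous_sqrt.continuousOn hq1)
  have hK := (continuous_comp_one_sub_sq_mul_sin_sq continuousOn_one_div_sqrt hq1)
  rw [← sub_pos, Ec, Kc, ← integral_const_mul,
    ← integral_sub ((hE.const_mul 2).intervalIntegrable _ _) (hK.intervalIntegrable _ _)]
  refine intervalIntegral_pos_of_pos_on ((hE.const_mul 2).sub hK |>.intervalIntegrable _ _)
    (fun θ hθ => ?_) pi_div_two_pos
  have hu := one_sub_sq_mul_sin_sq_pos hq1 θ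
  have hcos : 0 < cos θ := cos_pos_of_mem_Ioo ⟨by linarith [hθ.1, pi_pos], hθ.2⟩
  rw [sub_pos, div_lt_iff₀ (sqrt_pos.2 hu), mul_assoc, mul_self_sqrt hu.le]
  nlinarith [sin_sq_add_cos_sq θ, sq_nonneg (sin θ), mul_pos hcos hcos]

lemma hasDerivAt_Ec {q : ℝ} (hq0 : q ≠ 0) (hq : q ^ 2 < 1) :
    HasDerivAt Ec ((Ec q - Kc q) / q) q := by
  refine (hasDerivAt_integral_comp_one_sub_sq_mul_sin_sq (φ' := fun u => 1 / (2 * √u))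
    (fun u hu => hasDerivAt_sqrt hu.ne') ?_ hq).congr_deriv ?_
  · exact continuousOn_const.div (by fun_prop)
      fun _ hu => by have := sqrt_pos.2 hu; positivity
  rw [Ec, Kc, ← integral_sub
    ((continuous_comp_one_sub_sq_mul_sin_sq continuous_sqrt.continuousOn hq).intervalIntegrable _ _)
    ((continuous_comp_one_sub_sq_mul_sin_sq continuousOn_one_div_sqrt hq).intervalIntegrable _ _),
    ← integral_div]
  refine integral_congr fun θ _ => ?_
  have hu := one_sub_sq_mul_sin_sq_pos hq θ
  have hw := sqrt_pos.2 hu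
  field_simp
  rw [sq_sqrt hu.le]
  ring

lemma hasDerivAt_sin_mul_cos_div_sqrt {q : ℝ} (hq : q ^ 2 < 1) (θ : ℝ) :
    HasDerivAt (fun θ => sin θ * cos θ / √(1 - q ^ 2 * sin θ ^ 2))
      ((1 - 2 * sin θ ^ 2 + q ^ 2 * sin θ ^ 4) / √(1 - q ^ 2 * sin θ ^ 2) ^ 3) θ := by
  have hu := one_sub_sq_mul_sin_sq_pos hq θ
  have hw := sqrt_pos.2 hu
  have hden := (((hasDerivAt_sin θ).pow 2).const_mul (q ^ 2)).const_sub 1 |>.sqrt hu.ne'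
  refine (((hasDerivAt_sin θ).mul (hasDerivAt_cos θ)).div hden hw.ne').congr_deriv ?_
  simp only [Pi.pow_apply, Pi.mul_apply]
  have hsq := sq_sqrt hu.le
  set w := √(1 - q ^ 2 * sin θ ^ 2)
  field_simp
  rw [hsq, cos_sq' θ]
  push_cast
  ring

lemma hasDerivAt_Kc {q : ℝ} (hq0 : q ≠ 0) (hq : q ^ 2 < 1) :
    HasDerivAt Kc ((Ec q - (1 - q ^ 2) * Kc q) / (q * (1 - q ^ 2))) q := by
  have hq1 : 1 - q ^ 2 ≠ 0 := by linarith
  have hE := continuous_comp_one_sub_sq_mul_sin_sq continuous_sqrt.continuousOn hq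
  have hK := continuous_comp_one_sub_sq_mul_sin_sq continuousOn_one_div_sqrt hq
  have hD : Continuous fun θ => (1 - 2 * sin θ ^ 2 + q ^ 2 * sin θ ^ 4) /
      √(1 - q ^ 2 * sin θ ^ 2) ^ 3 :=
    (by fun_prop : Continuous fun θ => 1 - 2 * sin θ ^ 2 + q ^ 2 * sin θ ^ 4).div (hE.pow 3)
      fun θ => (pow_pos (sqrt_pos.2 (one_sub_sq_mul_sin_sq_pos hq θ)) 3).ne'
  have hibp : ∫ θ in (0:ℝ)..π/2, (1 - 2 * sin θ ^ 2 + q ^ 2 * sin θ ^ 4) /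
      √(1 - q ^ 2 * sin θ ^ 2) ^ 3 = 0 := by
    rw [integral_eq_sub_of_hasDerivAt (fun θ _ => hasDerivAt_sin_mul_cos_div_sqrt hq θ)
      (hD.intervalIntegrable _ _)]
    simp
  refine (hasDerivAt_integral_comp_one_sub_sq_mul_sin_sq (φ' := fun u => -1 / (2 * u * √u))
    (fun u hu => hasDerivAt_one_div_sqrt hu) ?_ hq).congr_deriv ?_
  · exact continuousOn_const.div (by fun_prop)
      fun u hu => by have := sqrt_pos.2 hu; have : 0 < u := hu; positivity
  calc ∫ θ in (0:ℝ)..π/2, -2 * q * sin θ ^ 2 *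
          (-1 / (2 * (1 - q ^ 2 * sin θ ^ 2) * √(1 - q ^ 2 * sin θ ^ 2)))
      = ∫ θ in (0:ℝ)..π/2,
          ((√(1 - q ^ 2 * sin θ ^ 2) - (1 - q ^ 2) * (1 / √(1 - q ^ 2 * sin θ ^ 2)))
            / (q * (1 - q ^ 2)) - q / (1 - q ^ 2) * ((1 - 2 * sin θ ^ 2 + q ^ 2 * sin θ ^ 4) /
            √(1 - q ^ 2 * sin θ ^ 2) ^ 3)) := integral_congr fun θ _ => by
        have hu := one_sub_sq_mul_sin_sq_pos hq θ
        have hsq := sq_sqrt hu.le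
        set w := √(1 - q ^ 2 * sin θ ^ 2)
        have hw : w ≠ 0 := (sqrt_pos.2 hu).ne'
        field_simp
        rw [hsq]
        ring
    _ = (Ec q - (1 - q ^ 2) * Kc q) / (q * (1 - q ^ 2)) -
          q / (1 - q ^ 2) * ∫ θ in (0:ℝ)..π/2, (1 - 2 * sin θ ^ 2 + q ^ 2 * sin θ ^ 4) /
            √(1 - q ^ 2 * sin θ ^ 2) ^ 3 := by
      rw [integral_sub, integral_const_mul, integral_div, integral_sub, integral_const_mul]
      · rfl
      exacts [hE.intervalIntegrable _ _, (hK.const_mul _).intervalIntegrable _ _,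
        ((hE.sub (hK.const_mul _)).div_const _).intervalIntegrable _ _,
        (hD.const_mul _).intervalIntegrable _ _]
    _ = _ := by rw [hibp, mul_zero, sub_zero]

lemma hasDerivAt_fc {q : ℝ} (hq0 : q ≠ 0) (hq : q ^ 2 < 1) :
    HasDerivAt fc (q * ((20 * q ^ 2 - 13) * Kc q + 20 * (1 - 2 * q ^ 2) * Ec q)) q := by
  have hq1 : 1 - q ^ 2 ≠ 0 := by linarith
  have hA : HasDerivAt (fun x => 4 * x ^ 4 - 5 * x ^ 2 + 1) (16 * q ^ 3 - 10 * q) q :=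
    ((((hasDerivAt_pow 4 q).const_mul 4).sub ((hasDerivAt_pow 2 q).const_mul 5)).add_const 1
      ).congr_deriv (by push_cast; ring)
  have hB : HasDerivAt (fun x => -8 * x ^ 4 + 8 * x ^ 2 - 1) (-32 * q ^ 3 + 16 * q) q :=
    ((((hasDerivAt_pow 4 q).const_mul (-8)).add ((hasDerivAt_pow 2 q).const_mul 8)).sub_const 1
      ).congr_deriv (by push_cast; ring)
  refine ((hA.mul (hasDerivAt_Kc hq0 hq)).add (hB.mul (hasDerivAt_Ec hq0 hq))).congr_deriv ?_
  field_simp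
  ring

lemma strictAntiOn_two_mul_Ec_sub_Kc : StrictAntiOn (fun q => 2 * Ec q - Kc q) (Ioo 0 1) := by
  have hG {q : ℝ} (hq : q ∈ Ioo (0 : ℝ) 1) : HasDerivAt (fun q => 2 * Ec q - Kc q)
      (((1 - 2 * q ^ 2) * Ec q - (1 - q ^ 2) * Kc q) / (q * (1 - q ^ 2))) q := by
    have hq1 : q ^ 2 < 1 := by nlinarith [hq.1, hq.2]
    have hq1' : 1 - q ^ 2 ≠ 0 := by linarith
    refine (((hasDerivAt_Ec hq.1.ne' hq1).const_mul 2).sub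
      (hasDerivAt_Kc hq.1.ne' hq1)).congr_deriv ?_
    field_simp
    ring
  refine strictAntiOn_of_deriv_neg (convex_Ioo 0 1)
    (fun q hq => (hG hq).continuousAt.continuousWithinAt) fun q hq => ?_
  rw [interior_Ioo] at hq
  have hq1 : q ^ 2 < 1 := by nlinarith [hq.1, hq.2]
  rw [(hG hq).deriv]
  refine div_neg_of_neg_of_pos ?_ (mul_pos hq.1 (by linarith))
  have hK := Kc_pos hq1
  have hE := Ec_pos hq1
  have hEK := Ec_le_Kc hq1
  rcases le_or_gt (1 - 2 * q ^ 2) 0 with h | h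
  · nlinarith [mul_nonneg (neg_nonneg.2 h) hE.le, sq_nonneg q]
  · nlinarith [mul_le_mul_of_nonneg_left hEK h.le, mul_pos (pow_pos hq.1 2) hK]

lemma fc_neg_of_two_mul_Ec_le_Kc {q : ℝ} (hq : 1 / 2 < q ^ 2) (hq1 : q ^ 2 < 1)
    (hEK : 2 * Ec q ≤ Kc q) : fc q < 0 := by
  have hK := Kc_pos hq1
  have hE := Ec_pos hq1
  rw [fc]
  rcases le_or_gt (-8 * q ^ 4 + 8 * q ^ 2 - 1) 0 with hB | hB
  · have hA : 0 < (4 * q ^ 2 - 1) * (1 - q ^ 2) := mul_pos (by linarith) (by linarith)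
    nlinarith [mul_nonneg (neg_nonneg.2 hB) hE.le, mul_pos hA hK]
  · nlinarith [mul_le_mul_of_nonneg_left hEK hB.le]

lemma deriv_fc_neg {q : ℝ} (hq0 : 0 < q) (hq : 1 / 2 < q ^ 2) (hq1 : q ^ 2 < 1)
    (hKE : Kc q < 2 * Ec q) : deriv fc q < 0 := by
  rw [(hasDerivAt_fc hq0.ne' hq1).deriv]
  refine mul_neg_of_pos_of_neg hq0 ?_
  have hK := Kc_pos hq1
  have hE := Ec_pos hq1
  rcases le_or_gt (20 * q ^ 2 - 13) 0 with h | h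
  · nlinarith [mul_nonneg (neg_nonneg.2 h) hK.le]
  · nlinarith [mul_lt_mul_of_pos_left hKE h]

lemma continuousOn_fc : ContinuousOn fc (Ioo 0 1) := fun q hq =>
  (hasDerivAt_fc hq.1.ne' (by nlinarith [hq.1, hq.2])).continuousAt.continuousWithinAt

lemma strictAntiOn_fc {a b : ℝ} (ha : 0 < a) (ha2 : 1 / 2 ≤ a ^ 2) (hb : b < 1)
    (hKE : ∀ q ∈ Ioo a b, Kc q < 2 * Ec q) : StrictAntiOn fc (Icc a b) := by
  refine strictAntiOn_of_deriv_neg (convex_Icc a b)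
    (continuousOn_fc.mono (Icc_subset_Ioo ha hb)) fun q hq => ?_
  rw [interior_Icc] at hq
  have hq0 : 0 < q := ha.trans hq.1
  have hq1 : q ^ 2 < 1 := by nlinarith [hq.2]
  exact deriv_fc_neg hq0 (by nlinarith [hq.1]) hq1 (hKE q hq)

lemma one_div_sqrt_two_sq : (1 / √2 : ℝ) ^ 2 = 1 / 2 := by
  rw [div_pow, one_pow, sq_sqrt zero_le_two]

lemma fc_one_div_sqrt_two_pos : 0 < fc (1 / √2) := by
  have h := Kc_lt_two_mul_Ec one_div_sqrt_two_sq.le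
  rw [fc, show (1 / √2 : ℝ) ^ 4 = ((1 / √2) ^ 2) ^ 2 by ring, one_div_sqrt_two_sq]
  linarith

lemma existsUnique_zero_of_strictAntiOn_Icc {f : ℝ → ℝ} {a b c : ℝ} (hab : a ≤ b)
    (hf : StrictAntiOn f (Icc a b)) (hcont : ContinuousOn f (Icc a b)) (ha : 0 < f a)
    (hbc : b < c) (hneg : ∀ x ∈ Ico b c, f x < 0) :
    ∃! x, (x ∈ Ioo a b ∧ f x = 0) ∧ (∀ y ∈ Ico a x, 0 < f y) ∧
      (∀ y ∈ Ioo x c, f y < 0) := by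
  have hb := hneg b ⟨le_rfl, hbc⟩
  obtain ⟨x, hx, hfx⟩ := intermediate_value_Icc' hab hcont ⟨hb.le, ha.le⟩
  have hxa : a < x := lt_of_le_of_ne hx.1 (by rintro rfl; linarith)
  have hxb : x < b := lt_of_le_of_ne hx.2 (by rintro rfl; linarith)
  refine ⟨x, ⟨⟨⟨hxa, hxb⟩, hfx⟩, fun y hy => ?_, fun y hy => ?_⟩, ?_⟩
  · rw [← hfx]
    exact hf ⟨hy.1, hy.2.le.trans hx.2⟩ hx hy.2
  · rcases lt_or_ge y b with hyb | hyb
    · rw [← hfx]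
      exact hf hx ⟨hx.1.trans hy.1.le, hyb.le⟩ hy.1
    · exact hneg y ⟨hyb, hy.2⟩
  · rintro y ⟨⟨hy, hfy⟩, -⟩
    exact hf.injOn (Ioo_subset_Icc_self hy) hx (hfy.trans hfx.symm)

theorem stmt_5 (qstar : ℝ) (hqs : qstar ∈ Ioo (0:ℝ) 1) (hqs0 : 2 * Ec qstar = Kc qstar) :
    0 < fc (1 / Real.sqrt 2) ∧
    (∀ q ∈ Ico qstar 1, fc q < 0) ∧
    StrictAntiOn fc (Ioo (1 / Real.sqrt 2) qstar) ∧
    ∃! qhat : ℝ, (qhat ∈ Ioo (1 / Real.sqrt 2) qstar ∧ fc qhat = 0) ∧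
      (∀ q ∈ Ico (1 / Real.sqrt 2) qhat, 0 < fc q) ∧
      (∀ q ∈ Ioo qhat 1, fc q < 0) := by
  have hq0 : 1 / √2 ∈ Ioo (0 : ℝ) 1 :=
    ⟨by positivity, by nlinarith [one_div_sqrt_two_sq, show (0 : ℝ) < 1 / √2 by positivity]⟩
  have hG := strictAntiOn_two_mul_Ec_sub_Kc
  have hlt : 1 / √2 < qstar :=
    (hG.lt_iff_gt hqs hq0).1 (by linarith [Kc_lt_two_mul_Ec one_div_sqrt_two_sq.le])
  have hneg : ∀ q ∈ Ico qstar 1, fc q < 0 := fun q hq => by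
    have hq' : q ∈ Ioo (0 : ℝ) 1 := ⟨hqs.1.trans_le hq.1, hq.2⟩
    exact fc_neg_of_two_mul_Ec_le_Kc (by nlinarith [one_div_sqrt_two_sq, hq0.1, hq.1])
      (by nlinarith [hq'.1, hq'.2]) (by linarith [hG.antitoneOn hqs hq' hq.1])
  have hanti : StrictAntiOn fc (Icc (1 / √2) qstar) :=
    strictAntiOn_fc hq0.1 one_div_sqrt_two_sq.ge hqs.2 fun q hq => by
      linarith [hG ⟨hq0.1.trans hq.1, hq.2.trans hqs.2⟩ hqs hq.2]
  exact ⟨fc_one_div_sqrt_two_pos, hneg, hanti.mono Ioo_subset_Icc_self,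
    existsUnique_zero_of_strictAntiOn_Icc hlt.le hanti
      (continuousOn_fc.mono (Icc_subset_Ioo hq0.1 hqs.2)) fc_one_div_sqrt_two_pos hqs.2 hneg⟩
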